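/- arXiv:2006.06783 — 5 statements merged into one kernel-verified Lean document; each statement's English description precedes it below -/
import Mathlib

section
/- Let U and V be real random variables supported on [μ - Δ, μ + Δ]. Suppose that for all measurable events E, P[U ∈ E] ≤ e^ε P[V ∈ E] + δ and P[V ∈ E] ≤ e^ε P[U ∈ E] + δ. Then |E[U] - E[V]| ≤ (e^ε - 1)·E[|U - μ|] + 2δΔ. -/
/-!
By the layer-cake formula, for `X` with `|X| ≤ Δ` we have
`E[X] = ∫₀^Δ (P[X > t] - P[X < -t]) dt` and `E[|X|] = ∫₀^Δ (P[X > t] + P[X < -t]) dt`.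
Applied to `U - μ` and `V - μ`, the difference of means becomes an integral over `(0, Δ]` of
differences of tail probabilities. Two numbers `a, b` with `a ≤ e b + δ` and `b ≤ e a + δ`
(with `e ≥ 1`) satisfy `|a - b| ≤ (e - 1) a + δ`; integrating this bound over `(0, Δ]` for the
upper and the lower tails gives `(e^ε - 1) E[|U - μ|] + 2δΔ`.
-/

open MeasureTheory Set

lemma abs_sub_le_sub_one_mul_add {a b e d : ℝ} (he : 1 ≤ e) (hab : a ≤ e * b + d)
    (hba : b ≤ e * a + d) : |a - b| ≤ (e - 1) * a + d := by
  rcases le_total a b with h | h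
  · rw [abs_sub_comm, abs_of_nonneg (sub_nonneg.2 h)]
    linarith
  · rw [abs_of_nonneg (sub_nonneg.2 h)]
    nlinarith [mul_le_mul_of_nonneg_left h (sub_nonneg.2 he)]

section LayerCake

variable {Ω : Type*} [MeasurableSpace Ω] {P : Measure Ω} [IsFiniteMeasure P]

lemma integrable_of_ae_abs_sub_le {f : Ω → ℝ} (hf : AEMeasurable f P) {c Δ : ℝ}
    (hfΔ : ∀ᵐ ω ∂P, |f ω - c| ≤ Δ) : Integrable f P :=
  .of_bound hf.aestronglyMeasurable (|c| + Δ) <| hfΔ.mono fun ω h => by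
    linarith [Real.norm_eq_abs (f ω), abs_sub_abs_le_abs_sub (f ω) c]

lemma integrableOn_measureReal_lt (f : Ω → ℝ) {s : Set ℝ} (hs : volume s ≠ ⊤) :
    IntegrableOn (fun t => P.real {ω | t < f ω}) s := by
  refine Measure.integrableOn_of_bounded (M := P.real univ) hs ?_ (.of_forall fun t => ?_)
  · refine (Measurable.ennreal_toReal (Antitone.measurable ?_)).aestronglyMeasurable
    exact fun _ _ hst => measure_mono fun _ h => hst.trans_lt h
  · rw [Real.norm_eq_abs, abs_of_nonneg measureReal_nonneg]
    exact measureReal_mono (subset_univ _)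

lemma integral_max_zero_eq_setIntegral_measureReal_lt {f : Ω → ℝ} (hf : Integrable f P)
    {Δ : ℝ} (hfΔ : ∀ᵐ ω ∂P, f ω ≤ Δ) :
    ∫ ω, max (f ω) 0 ∂P = ∫ t in Ioc 0 Δ, P.real {ω | t < f ω} := by
  rw [hf.pos_part.integral_eq_integral_meas_lt (.of_forall fun ω => le_max_right _ _)]
  have h_pos (t : ℝ) (ht : t ∈ Ioi 0) :
      P.real {ω | t < max (f ω) 0} = P.real {ω | t < f ω} := by
    simp only [lt_max_iff, not_lt.2 (le_of_lt (mem_Ioi.1 ht)), or_false]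
  rw [setIntegral_congr_fun measurableSet_Ioi h_pos]
  refine setIntegral_eq_of_subset_of_forall_sdiff_eq_zero measurableSet_Ioi
    Ioc_subset_Ioi_self fun t ⟨ht0, ht⟩ => ?_
  have hΔt : Δ < t := lt_of_not_ge fun h => ht ⟨ht0, h⟩
  exact (measureReal_eq_zero_iff).2
    (measure_mono_null (fun ω (hω : t < f ω) => not_le.2 (hΔt.trans hω)) (ae_iff.1 hfΔ))

variable {X : Ω → ℝ} {Δ : ℝ}

lemma integral_eq_setIntegral_measureReal_lt_sub (hX : Integrable X P)
    (hXΔ : ∀ᵐ ω ∂P, |X ω| ≤ Δ) :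
    ∫ ω, X ω ∂P =
      ∫ t in Ioc 0 Δ, (P.real {ω | t < X ω} - P.real {ω | t < -X ω}) := by
  rw [integral_sub (integrableOn_measureReal_lt _ measure_Ioc_lt_top.ne)
      (integrableOn_measureReal_lt _ measure_Ioc_lt_top.ne),
    ← integral_max_zero_eq_setIntegral_measureReal_lt hX (hXΔ.mono fun _ h => (abs_le.1 h).2),
    ← integral_max_zero_eq_setIntegral_measureReal_lt (f := fun ω => -X ω) hX.neg
      (hXΔ.mono fun _ h => neg_le.1 (abs_le.1 h).1),
    ← integral_sub hX.pos_part hX.neg_part]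
  simp only [max_zero_sub_max_neg_zero_eq_self]

lemma integral_abs_eq_setIntegral_measureReal_lt_add (hX : Integrable X P)
    (hXΔ : ∀ᵐ ω ∂P, |X ω| ≤ Δ) :
    ∫ ω, |X ω| ∂P =
      ∫ t in Ioc 0 Δ, (P.real {ω | t < X ω} + P.real {ω | t < -X ω}) := by
  rw [integral_add (integrableOn_measureReal_lt _ measure_Ioc_lt_top.ne)
      (integrableOn_measureReal_lt _ measure_Ioc_lt_top.ne),
    ← integral_max_zero_eq_setIntegral_measureReal_lt hX (hXΔ.mono fun _ h => (abs_le.1 h).2),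
    ← integral_max_zero_eq_setIntegral_measureReal_lt (f := fun ω => -X ω) hX.neg
      (hXΔ.mono fun _ h => neg_le.1 (abs_le.1 h).1),
    ← integral_add hX.pos_part hX.neg_part]
  simp only [max_zero_add_max_neg_zero_eq_abs_self]

end LayerCake

section Comparison

variable {Ω Ω' : Type*} [MeasurableSpace Ω] [MeasurableSpace Ω'] {P : Measure Ω}
  {Q : Measure Ω'} {X : Ω → ℝ} {Y : Ω' → ℝ} {e δ : ℝ}

theorem abs_integral_sub_integral_le [IsFiniteMeasure P] [IsFiniteMeasure Q]
    (hX : Integrable X P) (hY : Integrable Y Q) {Δ : ℝ} (he : 1 ≤ e) (hΔ : 0 ≤ Δ)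
    (hXΔ : ∀ᵐ ω ∂P, |X ω| ≤ Δ) (hYΔ : ∀ᵐ ω ∂Q, |Y ω| ≤ Δ)
    (hXY : ∀ E, MeasurableSet E → P.real (X ⁻¹' E) ≤ e * Q.real (Y ⁻¹' E) + δ)
    (hYX : ∀ E, MeasurableSet E → Q.real (Y ⁻¹' E) ≤ e * P.real (X ⁻¹' E) + δ) :
    |∫ ω, X ω ∂P - ∫ ω, Y ω ∂Q| ≤ (e - 1) * ∫ ω, |X ω| ∂P + 2 * δ * Δ := by
  have hI : volume (Ioc (0 : ℝ) Δ) ≠ ⊤ := measure_Ioc_lt_top.ne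
  set A := fun t : ℝ => P.real {ω | t < X ω}
  set A' := fun t : ℝ => P.real {ω | t < -X ω}
  set B := fun t : ℝ => Q.real {ω | t < Y ω}
  set B' := fun t : ℝ => Q.real {ω | t < -Y ω}
  -- `{ω | t < X ω}` and `{ω | t < -X ω}` are the preimages of `Ioi t` and `{x | t < -x}`.
  have h_upper (t : ℝ) : |A t - B t| ≤ (e - 1) * A t + δ :=
    abs_sub_le_sub_one_mul_add he (hXY _ measurableSet_Ioi) (hYX _ measurableSet_Ioi)
  have h_lower (t : ℝ) : |A' t - B' t| ≤ (e - 1) * A' t + δ :=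
    have hE : MeasurableSet {x : ℝ | t < -x} := measurableSet_lt measurable_const measurable_neg
    abs_sub_le_sub_one_mul_add he (hXY _ hE) (hYX _ hE)
  have h_bound (t : ℝ) : ‖(A t - A' t) - (B t - B' t)‖ ≤ (e - 1) * (A t + A' t) + 2 * δ :=
    calc ‖(A t - A' t) - (B t - B' t)‖ ≤ |A t - B t| + |A' t - B' t| := by
          rw [Real.norm_eq_abs, show A t - A' t - (B t - B' t) = (A t - B t) - (A' t - B' t)
            by ring]
          exact abs_sub _ _
      _ ≤ (e - 1) * (A t + A' t) + 2 * δ := by linarith [h_upper t, h_lower t]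
  have hA : IntegrableOn (fun t => A t + A' t) (Ioc 0 Δ) :=
    (integrableOn_measureReal_lt X hI).add (integrableOn_measureReal_lt _ hI)
  have hXt : IntegrableOn (fun t => A t - A' t) (Ioc 0 Δ) :=
    (integrableOn_measureReal_lt X hI).sub (integrableOn_measureReal_lt _ hI)
  have hYt : IntegrableOn (fun t => B t - B' t) (Ioc 0 Δ) :=
    (integrableOn_measureReal_lt Y hI).sub (integrableOn_measureReal_lt _ hI)
  calc |∫ ω, X ω ∂P - ∫ ω, Y ω ∂Q|
      = ‖∫ t in Ioc 0 Δ, ((A t - A' t) - (B t - B' t))‖ := by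
        rw [integral_sub hXt hYt, integral_eq_setIntegral_measureReal_lt_sub hX hXΔ,
          integral_eq_setIntegral_measureReal_lt_sub hY hYΔ, Real.norm_eq_abs]
    _ ≤ ∫ t in Ioc 0 Δ, ((e - 1) * (A t + A' t) + 2 * δ) :=
        norm_integral_le_of_norm_le ((hA.const_mul _).add (integrable_const _))
          (.of_forall h_bound)
    _ = (e - 1) * ∫ ω, |X ω| ∂P + 2 * δ * Δ := by
        rw [integral_add (hA.const_mul _) (integrable_const _), integral_const_mul,
          integral_abs_eq_setIntegral_measureReal_lt_add hX hXΔ, setIntegral_const,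
          Real.volume_real_Ioc_of_le hΔ, smul_eq_mul]
        ring

end Comparison

theorem stmt4_general {Ω₁ Ω₂ : Type*} [MeasureSpace Ω₁] [MeasureSpace Ω₂]
    [IsProbabilityMeasure (volume : Measure Ω₁)] [IsProbabilityMeasure (volume : Measure Ω₂)]
    (U : Ω₁ → ℝ) (V : Ω₂ → ℝ) (hU : Measurable U) (hV : Measurable V)
    (ε δ Δ μ : ℝ) (hε : 0 ≤ ε) (hΔ : 0 ≤ Δ)
    (hUsupp : ∀ᵐ ω, U ω ∈ Set.Icc (μ - Δ) (μ + Δ))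
    (hVsupp : ∀ᵐ ω, V ω ∈ Set.Icc (μ - Δ) (μ + Δ))
    (hUV : ∀ E : Set ℝ, MeasurableSet E →
      ((volume : Measure Ω₁) (U ⁻¹' E)).toReal ≤
        Real.exp ε * ((volume : Measure Ω₂) (V ⁻¹' E)).toReal + δ)
    (hVU : ∀ E : Set ℝ, MeasurableSet E →
      ((volume : Measure Ω₂) (V ⁻¹' E)).toReal ≤
        Real.exp ε * ((volume : Measure Ω₁) (U ⁻¹' E)).toReal + δ) :
    |(∫ ω, U ω) - ∫ ω, V ω| ≤ (Real.exp ε - 1) * (∫ ω, |U ω - μ|) + 2 * δ * Δ := by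
  have hUμ : ∀ᵐ ω, |U ω - μ| ≤ Δ :=
    hUsupp.mono fun _ h => abs_sub_le_iff.2 ⟨by linarith [h.2], by linarith [h.1]⟩
  have hVμ : ∀ᵐ ω, |V ω - μ| ≤ Δ :=
    hVsupp.mono fun _ h => abs_sub_le_iff.2 ⟨by linarith [h.2], by linarith [h.1]⟩
  have hUint : Integrable U := integrable_of_ae_abs_sub_le hU.aemeasurable hUμ
  have hVint : Integrable V := integrable_of_ae_abs_sub_le hV.aemeasurable hVμ
  have key := abs_integral_sub_integral_le (X := fun ω => U ω - μ) (Y := fun ω => V ω - μ)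
    (hUint.sub (integrable_const μ)) (hVint.sub (integrable_const μ))
    (Real.one_le_exp hε) hΔ hUμ hVμ
    (fun E hE => hUV _ (measurable_sub_const μ hE))
    (fun E hE => hVU _ (measurable_sub_const μ hE))
  simpa only [integral_sub hUint (integrable_const μ), integral_sub hVint (integrable_const μ),
    integral_const, probReal_univ, one_smul, sub_sub_sub_cancel_right] using key

/-- If `U` and `V` are random variables supported on `[μ - Δ, μ + Δ]` satisfying
`(ε, δ)`-indistinguishability (`P[U ∈ E] ≤ e^ε P[V ∈ E] + δ` and symmetrically, for all
measurable events `E`), then `|E[U] - E[V]| ≤ (e^ε - 1)·E[|U - μ|] + 2δΔ`. -/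
theorem stmt4 {Ω₁ Ω₂ : Type*} [MeasureSpace Ω₁] [MeasureSpace Ω₂]
    [IsProbabilityMeasure (volume : Measure Ω₁)] [IsProbabilityMeasure (volume : Measure Ω₂)]
    (U : Ω₁ → ℝ) (V : Ω₂ → ℝ) (hU : Measurable U) (hV : Measurable V)
    (ε δ Δ μ : ℝ) (hε : 0 ≤ ε) (hδ : 0 ≤ δ) (hΔ : 0 ≤ Δ)
    (hUsupp : ∀ᵐ ω, U ω ∈ Set.Icc (μ - Δ) (μ + Δ))
    (hVsupp : ∀ᵐ ω, V ω ∈ Set.Icc (μ - Δ) (μ + Δ))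
    (hUV : ∀ E : Set ℝ, MeasurableSet E →
      ((volume : Measure Ω₁) (U ⁻¹' E)).toReal ≤
        Real.exp ε * ((volume : Measure Ω₂) (V ⁻¹' E)).toReal + δ)
    (hVU : ∀ E : Set ℝ, MeasurableSet E →
      ((volume : Measure Ω₂) (V ⁻¹' E)).toReal ≤
        Real.exp ε * ((volume : Measure Ω₁) (U ⁻¹' E)).toReal + δ) :
    |(∫ ω, U ω) - ∫ ω, V ω| ≤ (Real.exp ε - 1) * (∫ ω, |U ω - μ|) + 2 * δ * Δ :=
  stmt4_general U V hU hV ε δ Δ μ hε hΔ hUsupp hVsupp hUV hVU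
end

section
/- Let P ∼ Beta(β, β) and, conditioned on P, let Z₁, ..., Zₙ ∈ {0,1} be independent Bernoulli(P). Then for any function f : {0,1}ⁿ → ℝ, E[f(Z)·Σᵢ(Zᵢ - P)] = 2β·E[f(Z)·(P - 1/2)]. -/
open MeasureTheory

/-- The expectation `E[h(P, Z)]` where `P ∼ Beta(β, β)` and, conditioned on `P = p`,
`Z = (Z₁, …, Zₙ)` are i.i.d. `Bernoulli(p)` bits, written out as a Beta-density integral of
a sum over the `2^n` bit patterns weighted by their Bernoulli probabilities. -/
noncomputable def betaBernoulliExp (β : ℝ) (n : ℕ) (h : ℝ → (Fin n → Bool) → ℝ) : ℝ :=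
  (∫ p in Set.Ioo (0 : ℝ) 1, p ^ (β - 1) * (1 - p) ^ (β - 1) *
      ∑ z : Fin n → Bool, (∏ i, if z i then p else 1 - p) * h p z) /
  ∫ p in Set.Ioo (0 : ℝ) 1, p ^ (β - 1) * (1 - p) ^ (β - 1)

/-!
For a bit pattern `z` with `k` ones and `m` zeros, the Beta(β, β) density times the Bernoulli
likelihood `p ^ k * (1 - p) ^ m` is the Beta(β + k, β + m) kernel, and
`∑ᵢ (zᵢ - p) - 2β (p - 1/2) = (β + k) (1 - p) - (β + m) p` is exactly the factor produced by
differentiating `p ^ (β + k) * (1 - p) ^ (β + m)`. Hence the contribution of every `z` to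
`E[f(Z) (∑ᵢ (Zᵢ - P) - 2β (P - 1/2))]` is the integral of a derivative of a function vanishing
at both endpoints, which is zero.
-/

open Set Finset Real

section BetaKernel

variable {a b : ℝ}

lemma intervalIntegrable_rpow_mul_one_sub_rpow_zero_half (ha : 0 < a) (b : ℝ) :
    IntervalIntegrable (fun x : ℝ => x ^ (a - 1) * (1 - x) ^ (b - 1)) volume 0 (1 / 2) := by
  refine (intervalIntegral.intervalIntegrable_rpow' (by linarith)).mul_continuousOn ?_
  refine continuousOn_of_forall_continuousAt fun x hx => ?_
  rw [Set.uIcc_of_le (by norm_num)] at hx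
  exact (continuousAt_rpow_const _ _ (Or.inl (by linarith [hx.2]))).comp (by fun_prop)

lemma intervalIntegrable_rpow_mul_one_sub_rpow (ha : 0 < a) (hb : 0 < b) :
    IntervalIntegrable (fun x : ℝ => x ^ (a - 1) * (1 - x) ^ (b - 1)) volume 0 1 := by
  refine (intervalIntegrable_rpow_mul_one_sub_rpow_zero_half ha b).trans ?_
  have h := (intervalIntegrable_rpow_mul_one_sub_rpow_zero_half hb a).comp_sub_left 1
  norm_num at h
  exact h.symm.congr fun x _ => by simp only [mul_comm]

lemma integrableOn_Ioo_rpow_mul_one_sub_rpow_mul (ha : 0 < a) (hb : 0 < b) {g : ℝ → ℝ}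
    (hg : ContinuousOn g (Icc 0 1)) :
    IntegrableOn (fun x => x ^ (a - 1) * (1 - x) ^ (b - 1) * g x) (Ioo 0 1) := by
  rw [← intervalIntegrable_iff_integrableOn_Ioo_of_le zero_le_one]
  exact (intervalIntegrable_rpow_mul_one_sub_rpow ha hb).mul_continuousOn
    (by rwa [Set.uIcc_of_le zero_le_one])

lemma hasDerivAt_rpow_mul_one_sub_rpow {x : ℝ} (hx : x ∈ Ioo (0 : ℝ) 1) :
    HasDerivAt (fun x : ℝ => x ^ a * (1 - x) ^ b)
      (x ^ (a - 1) * (1 - x) ^ (b - 1) * (a * (1 - x) - b * x)) x := by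
  have hx0 : x ≠ 0 := hx.1.ne'
  have hx1 : 1 - x ≠ 0 := sub_ne_zero.2 hx.2.ne'
  have hpow := hasDerivAt_rpow_const (p := a) (Or.inl hx0)
  have hpow' := (hasDerivAt_rpow_const (p := b) (Or.inl hx1)).comp x
    ((hasDerivAt_id x).const_sub 1)
  refine (hpow.mul hpow').congr_deriv ?_
  have ha' : x ^ a = x ^ (a - 1) * x := by
    rw [← rpow_add_one hx0]; norm_num
  have hb' : (1 - x) ^ b = (1 - x) ^ (b - 1) * (1 - x) := by
    rw [← rpow_add_one hx1]; norm_num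
  simp only [Function.comp_apply, ha', hb']
  ring

lemma integral_Ioo_rpow_mul_one_sub_rpow_mul_score (ha : 0 < a) (hb : 0 < b) :
    ∫ x in Ioo (0 : ℝ) 1, x ^ (a - 1) * (1 - x) ^ (b - 1) * (a * (1 - x) - b * x) = 0 := by
  have hcont : ContinuousOn (fun x : ℝ => x ^ a * (1 - x) ^ b) (Icc 0 1) := by
    apply Continuous.continuousOn
    exact (continuous_rpow_const ha.le).mul ((continuous_rpow_const hb.le).comp (by fun_prop))
  have hderiv_int := (intervalIntegrable_rpow_mul_one_sub_rpow ha hb).mul_continuousOn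
    (g := fun x => a * (1 - x) - b * x) (by fun_prop)
  have hFTC := intervalIntegral.integral_eq_sub_of_hasDeriv_right_of_le zero_le_one hcont
    (fun x hx => (hasDerivAt_rpow_mul_one_sub_rpow hx).hasDerivWithinAt) hderiv_int
  rw [intervalIntegral.integral_of_le zero_le_one, integral_Ioc_eq_integral_Ioo] at hFTC
  rw [hFTC]
  norm_num [zero_rpow ha.ne', zero_rpow hb.ne']

lemma integral_Ioo_beta_mul_binomial_score (ha : 0 < a) (hb : 0 < b) (k m : ℕ) :
    ∫ p in Ioo (0 : ℝ) 1, p ^ (a - 1) * (1 - p) ^ (b - 1) *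
      (p ^ k * (1 - p) ^ m * ((k - (k + m) * p) - ((a + b) * p - a))) = 0 := by
  have hposterior : EqOn
      (fun p : ℝ => p ^ (a - 1) * (1 - p) ^ (b - 1) *
        (p ^ k * (1 - p) ^ m * ((k - (k + m) * p) - ((a + b) * p - a))))
      (fun p => p ^ (a + k - 1) * (1 - p) ^ (b + m - 1) *
        ((a + k) * (1 - p) - (b + m) * p)) (Ioo 0 1) := by
    intro p hp
    dsimp only
    rw [show a + k - 1 = a - 1 + k by ring, show b + m - 1 = b - 1 + m by ring,
      rpow_add_natCast hp.1.ne', rpow_add_natCast (sub_ne_zero.2 hp.2.ne')]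
    ring
  rw [setIntegral_congr_fun measurableSet_Ioo hposterior]
  exact integral_Ioo_rpow_mul_one_sub_rpow_mul_score (by positivity) (by positivity)

end BetaKernel

section BitPatterns

variable {n : ℕ}

lemma prod_ite_eq_pow_mul_pow (z : Fin n → Bool) (p : ℝ) :
    (∏ i, if z i then p else 1 - p) = p ^ #{i | z i} * (1 - p) ^ #{i | ¬ z i} := by
  rw [prod_ite, prod_const, prod_const]

lemma sum_boole_sub_eq (z : Fin n → Bool) (p : ℝ) :
    ∑ i, ((if z i then (1 : ℝ) else 0) - p) =
      #{i | z i} - ((#{i | z i} : ℝ) + #{i | ¬ z i}) * p := by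
  rw [← Nat.cast_add, card_filter_add_card_filter_not, sum_sub_distrib, sum_boole, sum_const]
  simp

end BitPatterns

/-- Fingerprinting lemma: if `P ∼ Beta(β, β)` and, conditioned on `P`, `Z₁, …, Zₙ ∈ {0,1}`
are i.i.d. `Bernoulli(P)`, then for any `f : {0,1}ⁿ → ℝ`,
`E[f(Z)·Σᵢ (Zᵢ - P)] = 2β · E[f(Z)·(P - 1/2)]`. -/
theorem stmt5 (β : ℝ) (hβ : 0 < β) (n : ℕ) (f : (Fin n → Bool) → ℝ) :
    betaBernoulliExp β n
        (fun p z => f z * ∑ i, ((if z i then (1 : ℝ) else 0) - p)) =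
      2 * β * betaBernoulliExp β n (fun p z => f z * (p - 1 / 2)) := by
  unfold betaBernoulliExp
  simp only [prod_ite_eq_pow_mul_pow, sum_boole_sub_eq]
  rw [← mul_div_assoc]
  congr 1
  have hintegrable (g : ℝ → ℝ) (hg : Continuous g) :=
    integrableOn_Ioo_rpow_mul_one_sub_rpow_mul hβ hβ hg.continuousOn
  rw [← sub_eq_zero, ← integral_const_mul,
    ← integral_sub (hintegrable _ (by fun_prop)) ((hintegrable _ (by fun_prop)).const_mul _)]
  calc _ = ∫ p in Ioo 0 1, ∑ z : Fin n → Bool, f z *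
          (p ^ (β - 1) * (1 - p) ^ (β - 1) * (p ^ #{i | z i} * (1 - p) ^ #{i | ¬ z i} *
            ((#{i | z i} - (#{i | z i} + #{i | ¬ z i}) * p) - ((β + β) * p - β)))) := by
        congr 1 with p
        simp only [mul_sum, ← sum_sub_distrib]
        exact sum_congr rfl fun z _ => by ring
    _ = 0 := by
        rw [integral_finsetSum _ fun z _ => (hintegrable _ (by fun_prop)).const_mul (f z)]
        refine sum_eq_zero fun z _ => ?_
        rw [integral_const_mul, integral_Ioo_beta_mul_binomial_score hβ hβ, mul_zero]
end

section
/- Let P ∼ Beta(β, β) and, conditioned on P, Z₁, ..., Zₙ i.i.d. Bernoulli(P). Then for any f : {0,1}ⁿ → ℝ, E[f(Z)·Σᵢ(Zᵢ - P)] = β·E[(f(Z) - 1/2)² + (P - 1/2)² - (f(Z) - P)²]. -/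
/-!
Conditioned on `Z = z` with `k` ones, the law of `P` is `Beta(β + k, β + n - k)`, and for
`a, b > 0` the Beta kernel satisfies `∫ p^(a-1) (1-p)^(b-1) (a (1-p) - b p) dp = 0`. With
`a = β + k`, `b = β + n - k` this says that, for each `z`, `k - n P` may be replaced by
`β (2P - 1)` under the expectation. Since `(f - 1/2)² + (P - 1/2)² - (f - P)² = (f - 1/2)(2P - 1)`,
the two sides then differ by `(β/2) E[2P - 1]`, which vanishes because `Beta(β, β)` has mean `1/2`.
-/

open MeasureTheory

open Set Finset

noncomputable def betaKernel (a b p : ℝ) : ℝ := p ^ (a - 1) * (1 - p) ^ (b - 1)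

lemma ofReal_betaKernel {a b p : ℝ} (hp : p ∈ Icc (0 : ℝ) 1) :
    (betaKernel a b p : ℂ) = (p : ℂ) ^ ((a : ℂ) - 1) * (1 - (p : ℂ)) ^ ((b : ℂ) - 1) := by
  have h1p : 0 ≤ 1 - p := sub_nonneg.mpr hp.2
  rw [betaKernel, Complex.ofReal_mul, Complex.ofReal_cpow hp.1, Complex.ofReal_cpow h1p]
  push_cast
  rfl

lemma integrableOn_betaKernel {a b : ℝ} (ha : 0 < a) (hb : 0 < b) :
    IntegrableOn (betaKernel a b) (Ioo 0 1) := by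
  have h := (Complex.betaIntegral_convergent (u := a) (v := b) (by simpa) (by simpa)).1
  refine IntegrableOn.congr_fun (h.mono_set Ioo_subset_Ioc_self).re (fun p hp => ?_)
    measurableSet_Ioo
  rw [RCLike.re_to_complex, ← ofReal_betaKernel (Ioo_subset_Icc_self hp), Complex.ofReal_re]

lemma ofReal_integral_betaKernel (a b : ℝ) :
    ((∫ p in Ioo 0 1, betaKernel a b p : ℝ) : ℂ) = Complex.betaIntegral a b := by
  rw [Complex.betaIntegral, intervalIntegral.integral_of_le zero_le_one,
    integral_Ioc_eq_integral_Ioo, ← integral_complex_ofReal]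
  exact setIntegral_congr_fun measurableSet_Ioo
    fun p hp => ofReal_betaKernel (Ioo_subset_Icc_self hp)

lemma betaKernel_mul_score {a b p : ℝ} (hp : p ∈ Ioo (0 : ℝ) 1) :
    betaKernel a b p * (a * (1 - p) - b * p) =
      a * betaKernel a (b + 1) p - b * betaKernel (a + 1) b p := by
  have h1p : 1 - p ≠ 0 := (sub_pos.mpr hp.2).ne'
  simp only [betaKernel, add_sub_cancel_right]
  rw [← sub_add_cancel a 1, ← sub_add_cancel b 1]
  simp only [add_sub_cancel_right, Real.rpow_add_one hp.1.ne', Real.rpow_add_one h1p]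
  ring

/-- The integrand is the derivative of `p ^ a * (1 - p) ^ b`, which vanishes at both ends;
instead of integrating by parts we read the identity off the recurrence
`a B(a, b + 1) = b B(a + 1, b)`. -/
lemma integral_betaKernel_mul_score {a b : ℝ} (ha : 0 < a) (hb : 0 < b) :
    ∫ p in Ioo 0 1, betaKernel a b p * (a * (1 - p) - b * p) = 0 := by
  rw [setIntegral_congr_fun measurableSet_Ioo fun p hp => betaKernel_mul_score hp,
    integral_sub ((integrableOn_betaKernel ha (by linarith)).const_mul a)
      ((integrableOn_betaKernel (by linarith) hb).const_mul b),
    integral_const_mul, integral_const_mul]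
  apply Complex.ofReal_injective
  push_cast
  rw [ofReal_integral_betaKernel, ofReal_integral_betaKernel]
  push_cast
  rw [Complex.betaIntegral_recurrence (by simpa) (by simpa), sub_self]

lemma integrableOn_betaKernel_mul {a b : ℝ} (ha : 0 < a) (hb : 0 < b) {g : ℝ → ℝ}
    (hg : Continuous g) : IntegrableOn (fun p => betaKernel a b p * g p) (Ioo 0 1) :=
  (integrableOn_betaKernel ha hb).mul_continuousOn_of_subset hg.continuousOn measurableSet_Ioo
    isCompact_Icc Ioo_subset_Icc_self

lemma integral_betaKernel_mul_two_mul_sub_one {a : ℝ} (ha : 0 < a) :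
    ∫ p in Ioo 0 1, betaKernel a a p * (2 * p - 1) = 0 := by
  have h := integral_betaKernel_mul_score ha ha
  have hscore : ∀ p, betaKernel a a p * (a * (1 - p) - a * p) =
      -a * (betaKernel a a p * (2 * p - 1)) := fun p => by ring
  simp only [hscore, integral_const_mul, mul_eq_zero, neg_eq_zero, ha.ne', false_or] at h
  exact h

section Bernoulli

variable {ι : Type*} [Fintype ι]

noncomputable def bernoulliWeight (z : ι → Bool) (p : ℝ) : ℝ :=
  ∏ i, if z i then p else 1 - p

lemma bernoulliWeight_eq (z : ι → Bool) (p : ℝ) :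
    bernoulliWeight z p = p ^ #{i | z i} * (1 - p) ^ #{i | ¬ z i} := by
  rw [bernoulliWeight, prod_ite, prod_const, prod_const]

lemma continuous_bernoulliWeight (z : ι → Bool) : Continuous (bernoulliWeight z) := by
  simp only [funext (bernoulliWeight_eq z)]
  fun_prop

lemma sum_boole_sub (z : ι → Bool) (p : ℝ) :
    ∑ i, ((if z i then (1 : ℝ) else 0) - p) = #{i | z i} - Fintype.card ι * p := by
  rw [sum_sub_distrib, sum_boole, sum_const, card_univ, nsmul_eq_mul]

lemma betaKernel_mul_bernoulliWeight {a b p : ℝ} (hp : p ∈ Ioo (0 : ℝ) 1) (z : ι → Bool) :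
    betaKernel a b p * bernoulliWeight z p =
      betaKernel (a + #{i | z i}) (b + #{i | ¬ z i}) p := by
  have h1p : 0 < 1 - p := sub_pos.mpr hp.2
  rw [bernoulliWeight_eq, betaKernel, betaKernel, add_sub_right_comm, add_sub_right_comm b,
    Real.rpow_add hp.1, Real.rpow_add h1p, Real.rpow_natCast, Real.rpow_natCast]
  ring

variable {β : ℝ}

lemma integral_betaKernel_mul_bernoulliWeight_mul_card_filter_sub (hβ : 0 < β) (z : ι → Bool) :
    ∫ p in Ioo 0 1, betaKernel β β p * bernoulliWeight z p * (#{i | z i} - Fintype.card ι * p) =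
      β * ∫ p in Ioo 0 1, betaKernel β β p * bernoulliWeight z p * (2 * p - 1) := by
  set a := β + #{i | z i}
  set b := β + #{i | ¬ z i}
  have hn : (#{i | z i} : ℝ) + #{i | ¬ z i} = Fintype.card ι := by
    exact_mod_cast card_filter_add_card_filter_not (s := univ) (fun i => z i = true)
  have hsplit : ∀ p ∈ Ioo (0 : ℝ) 1,
      betaKernel β β p * bernoulliWeight z p * (#{i | z i} - Fintype.card ι * p) =
        betaKernel a b p * (a * (1 - p) - b * p) +
          β * (betaKernel β β p * (bernoulliWeight z p * (2 * p - 1))) := fun p hp => by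
    rw [← betaKernel_mul_bernoulliWeight hp, ← hn]
    ring
  have ha : 0 < a := by positivity
  have hb : 0 < b := by positivity
  rw [setIntegral_congr_fun measurableSet_Ioo hsplit,
    integral_add (integrableOn_betaKernel_mul ha hb (by fun_prop))
      ((integrableOn_betaKernel_mul hβ hβ
        (g := fun p => bernoulliWeight z p * (2 * p - 1))
        ((continuous_bernoulliWeight z).mul (by fun_prop))).const_mul β),
    integral_betaKernel_mul_score ha hb, zero_add, integral_const_mul]
  simp only [mul_assoc]

variable [DecidableEq ι]

lemma sum_bernoulliWeight (p : ℝ) : ∑ z : ι → Bool, bernoulliWeight z p = 1 := by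
  simp only [bernoulliWeight]
  rw [← Fintype.prod_sum (fun _ (b : Bool) => if b then p else 1 - p)]
  simp

lemma integral_betaKernel_mul_sum_bernoulliWeight {a b : ℝ} (ha : 0 < a) (hb : 0 < b)
    (c : (ι → Bool) → ℝ) (g : ℝ → (ι → Bool) → ℝ) (hg : ∀ z, Continuous (g · z)) :
    ∫ p in Ioo 0 1, betaKernel a b p * ∑ z, bernoulliWeight z p * (c z * g p z) =
      ∑ z, c z * ∫ p in Ioo 0 1, betaKernel a b p * bernoulliWeight z p * g p z := by
  have hterm : ∀ p z, betaKernel a b p * (bernoulliWeight z p * (c z * g p z)) =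
      c z * (betaKernel a b p * (bernoulliWeight z p * g p z)) := fun p z => by ring
  simp only [mul_sum, hterm]
  rw [integral_finsetSum]
  · simp only [integral_const_mul, mul_assoc]
  · exact fun z _ => (integrableOn_betaKernel_mul ha hb (g := fun p => bernoulliWeight z p * g p z)
      ((continuous_bernoulliWeight z).mul (hg z))).const_mul _

lemma sum_integral_betaKernel_mul_bernoulliWeight_mul_two_mul_sub_one (hβ : 0 < β) :
    ∑ z : ι → Bool, ∫ p in Ioo 0 1, betaKernel β β p * bernoulliWeight z p * (2 * p - 1) = 0 := by
  have h := integral_betaKernel_mul_sum_bernoulliWeight hβ hβ (fun _ : ι → Bool => 1)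
    (fun p _ => 2 * p - 1) (fun _ => by fun_prop)
  simp only [← sum_mul, sum_bernoulliWeight, one_mul] at h
  rw [← h, integral_betaKernel_mul_two_mul_sub_one hβ]

end Bernoulli

lemma betaBernoulliExp_mul {β : ℝ} (hβ : 0 < β) {n : ℕ} (c : (Fin n → Bool) → ℝ)
    (g : ℝ → (Fin n → Bool) → ℝ) (hg : ∀ z, Continuous (g · z)) :
    betaBernoulliExp β n (fun p z => c z * g p z) =
      (∑ z, c z * ∫ p in Ioo 0 1, betaKernel β β p * bernoulliWeight z p * g p z) /
        ∫ p in Ioo 0 1, betaKernel β β p :=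
  congrArg (· / _) (integral_betaKernel_mul_sum_bernoulliWeight hβ hβ c g hg)

/-- Fingerprinting lemma (second form): if `P ∼ Beta(β, β)` and, conditioned on `P`,
`Z₁, …, Zₙ ∈ {0,1}` are i.i.d. `Bernoulli(P)`, then for any `f : {0,1}ⁿ → ℝ`,
`E[f(Z)·Σᵢ (Zᵢ - P)] = β · E[(f(Z) - 1/2)² + (P - 1/2)² - (f(Z) - P)²]`. -/
theorem stmt6 (β : ℝ) (hβ : 0 < β) (n : ℕ) (f : (Fin n → Bool) → ℝ) :
    betaBernoulliExp β n
        (fun p z => f z * ∑ i, ((if z i then (1 : ℝ) else 0) - p)) =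
      β * betaBernoulliExp β n
        (fun p z => (f z - 1 / 2) ^ 2 + (p - 1 / 2) ^ 2 - (f z - p) ^ 2) := by
  have hL : (fun p z => f z * ∑ i, ((if z i then (1 : ℝ) else 0) - p)) =
      fun p z => f z * (#{i | z i} - Fintype.card (Fin n) * p) := by
    simp only [sum_boole_sub]
  have hR : (fun p z => (f z - 1 / 2) ^ 2 + (p - 1 / 2) ^ 2 - (f z - p) ^ 2) =
      fun p z => (f z - 1 / 2) * (2 * p - 1) := by
    ext p z; ring
  rw [hL, hR, betaBernoulliExp_mul hβ _ _ (fun _ => by fun_prop),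
    betaBernoulliExp_mul hβ _ _ (fun _ => by fun_prop), ← mul_div_assoc]
  congr 1
  set G := fun z : Fin n → Bool =>
    ∫ p in Ioo 0 1, betaKernel β β p * bernoulliWeight z p * (2 * p - 1)
  calc ∑ z, f z * ∫ p in Ioo 0 1, betaKernel β β p * bernoulliWeight z p *
          (#{i | z i} - Fintype.card (Fin n) * p)
      = ∑ z, f z * (β * G z) := by
        simp only [integral_betaKernel_mul_bernoulliWeight_mul_card_filter_sub hβ, G]
    _ = β * ∑ z, (f z - 1 / 2) * G z + β / 2 * ∑ z, G z := by
        rw [mul_sum, mul_sum, ← sum_add_distrib]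
        congr 1 with z
        ring
    _ = β * ∑ z, (f z - 1 / 2) * G z := by
        rw [sum_integral_betaKernel_mul_bernoulliWeight_mul_two_mul_sub_one hβ, mul_zero, add_zero]
end

section
/- For B < 1/4, define the clipped logistic objective L_c(θ) whose derivative is (2/3)·clip(-1/(2(1+e^{θ/2})), B) + (1/3)·clip(1/(1+e^{-θ}), B), where clip(u, B) = max(min(u, B), -B). Then L_c'(θ) = 0 exactly at θ = 2·log(1/B - 1), i.e., the minimizer of the clipped objective is θ*_clipped = 2·log(1/B - 1). -/
/-!
With `t = σ(-θ/2)` and `s = σ(θ)` (`σ` the logistic sigmoid) the two per-sample gradients are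
`-t/2 < 0` and `s > 0`. Since `min s B ≤ B < 2B`, the clipped first term can only balance the
clipped second one while it is unclipped, so `L_c'(θ) = 0` iff `min s B = t`. If the second
term is unclipped too, `s ≤ B ≤ 1/2` forces `θ ≤ 0`, hence `t ≥ 1/2 ≥ B ≥ s = t`. So the zero
is exactly `σ(-θ/2) = B`, that is `θ = 2 log(1/B - 1)`.
-/

open Real

def clip (u B : ℝ) : ℝ := max (min u B) (-B)

lemma clip_of_nonneg {u B : ℝ} (hu : 0 ≤ u) (hB : 0 ≤ B) : clip u B = min u B :=
  max_eq_left ((neg_nonpos.mpr hB).trans (le_min hu hB))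

lemma clip_of_nonpos {u B : ℝ} (hu : u ≤ 0) (hB : 0 ≤ B) : clip u B = max u (-B) := by
  rw [clip, min_eq_left (hu.trans hB)]

lemma clip_balance_iff {t s B : ℝ} (ht : 0 ≤ t) (hs : 0 ≤ s) (hB : 0 < B) :
    2 / 3 * clip (-t / 2) B + 1 / 3 * clip s B = 0 ↔ min s B = t := by
  rw [clip_of_nonpos (by linarith) hB.le, clip_of_nonneg hs hB.le]
  have hmin : min s B ≤ B := min_le_right s B
  constructor
  · intro h
    rcases le_total (-t / 2) (-B) with hclipped | hunclipped
    · rw [max_eq_right hclipped] at h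
      linarith
    · rw [max_eq_left hunclipped] at h
      linarith
  · intro h
    rw [max_eq_left (by linarith), h]
    ring

lemma one_div_one_add_exp_neg (x : ℝ) : 1 / (1 + exp (-x)) = sigmoid x := by
  rw [one_div, sigmoid_def]

lemma sigmoid_eq_iff {x B : ℝ} (hB0 : 0 < B) (hB1 : B < 1) :
    sigmoid x = B ↔ -x = log (1 / B - 1) := by
  have hpos : 0 < 1 / B - 1 := by
    rw [sub_pos, lt_div_iff₀ hB0]
    linarith
  rw [sigmoid_def, inv_eq_iff_eq_inv, ← exp_eq_exp (x := -x), exp_log hpos, ← one_div,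
    eq_sub_iff_add_eq, add_comm]

lemma min_sigmoid_eq_sigmoid_neg_half_iff {θ B : ℝ} (hB : B ≤ 1 / 2) :
    min (sigmoid θ) B = sigmoid (-(θ / 2)) ↔ sigmoid (-(θ / 2)) = B := by
  constructor
  · intro h
    rcases le_total B (sigmoid θ) with hclipped | hunclipped
    · rwa [min_eq_right hclipped, eq_comm] at h
    · rw [min_eq_left hunclipped] at h
      have hθ : θ ≤ 0 := by
        rw [← sigmoid_le_iff, sigmoid_zero]
        linarith
      have : sigmoid 0 ≤ sigmoid (-(θ / 2)) := sigmoid_le (by linarith)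
      rw [sigmoid_zero] at this
      linarith
  · intro h
    have hθ : 0 ≤ θ := by
      have : sigmoid (-(θ / 2)) ≤ sigmoid 0 := by
        rw [h, sigmoid_zero]
        linarith
      linarith [sigmoid_le_iff.mp this]
    rw [← h, min_eq_right (sigmoid_le (by linarith))]

/-- For clipping threshold `B < 1/4`, the derivative of the clipped logistic objective,
`L_c'(θ) = (2/3)·clip(-1/(2(1+e^{θ/2})), B) + (1/3)·clip(1/(1+e^{-θ}), B)` with
`clip(u, B) = max(min(u, B), -B)`, vanishes exactly at `θ = 2·log(1/B - 1)`. -/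
theorem stmt14 (B : ℝ) (hB0 : 0 < B) (hB : B < 1 / 4) (θ : ℝ) :
    (2 / 3) * max (min (-1 / (2 * (1 + Real.exp (θ / 2)))) B) (-B) +
        (1 / 3) * max (min (1 / (1 + Real.exp (-θ))) B) (-B) = 0 ↔
      θ = 2 * Real.log (1 / B - 1) := by
  have hfirst : -1 / (2 * (1 + exp (θ / 2))) = -sigmoid (-(θ / 2)) / 2 := by
    rw [← one_div_one_add_exp_neg, neg_neg]
    field_simp
  rw [hfirst, one_div_one_add_exp_neg]
  change 2 / 3 * clip _ B + 1 / 3 * clip _ B = 0 ↔ _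
  rw [clip_balance_iff (sigmoid_nonneg _) (sigmoid_nonneg _) hB0,
    min_sigmoid_eq_sigmoid_neg_half_iff (by linarith), sigmoid_eq_iff hB0 (by linarith)]
  constructor <;> intro h <;> linarith
end

section
/- Consider the K-class softmax gradient field restricted to class 1: for θ = (θ⁽¹⁾, ..., θ⁽ᴷ⁾) ∈ (ℝᵖ)ᴷ and fixed x ≠ 0, define G⁽¹⁾(θ) = -(B/‖x‖₂)·(Σ_{k≥2} E_k)/√((Σ_{k≥2} E_k)² + Σ_{k≥2} E_k²)·x where E_k = exp(⟨θ⁽ᵏ⁾, x⟩). Then for k' ≥ 2, the Jacobian ∇_{θ⁽ᵏ'⁾} G⁽¹⁾(θ) = 0 if and only if ⟨θ⁽²⁾, x⟩ = ⟨θ⁽³⁾, x⟩ = ... = ⟨θ⁽ᴷ⁾, x⟩. -/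
/-!
Varying only `θ⁽ᵏ'⁾` changes `G⁽¹⁾` through `t = ⟪θ⁽ᵏ'⁾, x⟫` alone: with `S = Σ E_k` and
`Q = Σ E_k²`, `G⁽¹⁾ = a · S / √(S² + Q) · x`, and since `dS/dt = E_{k'}`, `dQ/dt = 2 E_{k'}²`,
the derivative of `S / √(S² + Q)` is `E_{k'} (Q - S E_{k'}) / √(S² + Q)³`. So the Jacobian
vanishes iff `Q = S E_{k'}`. If this holds for every `k'`, then `S E_k = S E_{k'}` with `S > 0`;
conversely, equal `E_k` give `Q = S E_{k'}` termwise.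
-/

open scoped RealInnerProductSpace
open Finset

theorem Finset.sum_comp_update_of_mem {ι α M : Type*} [DecidableEq ι] [AddCommMonoid M]
    {s : Finset ι} {i : ι} (h : i ∈ s) (g : α → M) (f : ι → α) (b : α) :
    ∑ j ∈ s, g (Function.update f i b j) = g b + ∑ j ∈ s.erase i, g (f j) := by
  rw [← add_sum_erase _ _ h, Function.update_self]
  congr 1
  exact sum_congr rfl fun j hj => by rw [Function.update_of_ne (ne_of_mem_erase hj)]

theorem HasDerivAt.div_sqrt_sq_add {S Q : ℝ → ℝ} {S' Q' t : ℝ} (hS : HasDerivAt S S' t)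
    (hQ : HasDerivAt Q Q' t) (hpos : 0 < S t ^ 2 + Q t) :
    HasDerivAt (fun s => S s / √(S s ^ 2 + Q s))
      ((S' * Q t - S t * Q' / 2) / √(S t ^ 2 + Q t) ^ 3) t := by
  have hroot : 0 < √(S t ^ 2 + Q t) := Real.sqrt_pos.mpr hpos
  have hW : HasDerivAt (fun s => S s ^ 2 + Q s) (2 * S t * S' + Q') t :=
    ((hS.pow 2).add hQ).congr_deriv (by ring)
  refine (hS.div (hW.sqrt hpos.ne') hroot.ne').congr_deriv ?_
  have hsq : √(S t ^ 2 + Q t) ^ 2 = S t ^ 2 + Q t := Real.sq_sqrt hpos.le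
  field_simp
  linear_combination (2 * S') * hsq

theorem fderiv_comp_inner_smul_eq_zero_iff {E : Type*} [NormedAddCommGroup E]
    [InnerProductSpace ℝ E] {g : ℝ → ℝ} {g' : ℝ} {x v : E} (hx : x ≠ 0)
    (hg : HasDerivAt g g' ⟪v, x⟫) :
    fderiv ℝ (fun w => g ⟪w, x⟫ • x) v = 0 ↔ g' = 0 := by
  have hinner : HasFDerivAt (fun w : E => ⟪w, x⟫) (innerSL ℝ x) v := by
    convert (innerSL ℝ x).hasFDerivAt using 1
    exact funext fun w => real_inner_comm x w
  have hG : HasFDerivAt (fun w => g ⟪w, x⟫ • x) ((g' • innerSL ℝ x).smulRight x) v :=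
    (hg.comp_hasFDerivAt v hinner).smul_const x
  rw [hG.fderiv]
  refine ⟨fun h => ?_, fun h => by simp [h]⟩
  simpa [hx] using congrArg (· x) h

open Real in
theorem fderiv_sum_exp_div_sqrt_smul_eq_zero_iff {E ι : Type*} [NormedAddCommGroup E]
    [InnerProductSpace ℝ E] [DecidableEq ι] {s : Finset ι} {k' : ι} (hk' : k' ∈ s) {a : ℝ}
    (ha : a ≠ 0) {x : E} (hx : x ≠ 0) (θ : ι → E) :
    fderiv ℝ (fun v => (a * ((∑ k ∈ s, exp ⟪Function.update θ k' v k, x⟫) /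
        √((∑ k ∈ s, exp ⟪Function.update θ k' v k, x⟫) ^ 2 +
          ∑ k ∈ s, exp ⟪Function.update θ k' v k, x⟫ ^ 2))) • x) (θ k') = 0 ↔
      ∑ k ∈ s, exp ⟪θ k, x⟫ ^ 2 = (∑ k ∈ s, exp ⟪θ k, x⟫) * exp ⟪θ k', x⟫ := by
  simp only [sum_comp_update_of_mem hk' (fun y => exp ⟪y, x⟫ ^ 2),
    sum_comp_update_of_mem hk' (fun y => exp ⟪y, x⟫)]
  rw [← add_sum_erase s _ hk', ← add_sum_erase s _ hk']
  set C := ∑ k ∈ s.erase k', exp ⟪θ k, x⟫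
  set C₂ := ∑ k ∈ s.erase k', exp ⟪θ k, x⟫ ^ 2
  set t := ⟪θ k', x⟫
  have hC₂ : 0 ≤ C₂ := sum_nonneg fun _ _ => sq_nonneg _
  have hpos : 0 < (exp t + C) ^ 2 + (exp t ^ 2 + C₂) := by positivity
  have hg := (((hasDerivAt_exp t).add_const C).div_sqrt_sq_add
    (((hasDerivAt_exp t).fun_pow 2).add_const C₂) hpos).const_mul a
  rw [fderiv_comp_inner_smul_eq_zero_iff hx hg]
  have hnum : exp t * (exp t ^ 2 + C₂) - (exp t + C) * ((2 : ℕ) * exp t ^ (2 - 1) * exp t) / 2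
      = exp t * (exp t ^ 2 + C₂ - (exp t + C) * exp t) := by push_cast; ring
  rw [hnum]
  simp [ha, exp_ne_zero, (sqrt_pos.mpr hpos).ne', sub_eq_zero]

theorem forall_sum_sq_eq_sum_mul_iff {ι : Type*} {s : Finset ι} {f : ι → ℝ}
    (hf : ∀ i ∈ s, 0 < f i) :
    (∀ j ∈ s, ∑ i ∈ s, f i ^ 2 = (∑ i ∈ s, f i) * f j) ↔ ∀ i ∈ s, ∀ j ∈ s, f i = f j := by
  refine ⟨fun h i hi j hj => ?_, fun h j hj => ?_⟩
  · have hsum : 0 < ∑ i ∈ s, f i := sum_pos' (fun i hi => (hf i hi).le) ⟨i, hi, hf i hi⟩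
    exact mul_left_cancel₀ hsum.ne' ((h i hi).symm.trans (h j hj))
  · rw [sum_mul]
    exact sum_congr rfl fun i hi => by rw [sq, h i hi j hj]

theorem stmt18_general (p K : ℕ) (hKpos : 0 < K) (B : ℝ) (hB : 0 < B)
    (x : EuclideanSpace ℝ (Fin p)) (hx : x ≠ 0)
    (θ : Fin K → EuclideanSpace ℝ (Fin p)) :
    (∀ k' : Fin K, k' ≠ ⟨0, hKpos⟩ →
        fderiv ℝ
          (fun v : EuclideanSpace ℝ (Fin p) =>
            (-(B / ‖x‖) *
                ((∑ k ∈ univ.erase (⟨0, hKpos⟩ : Fin K),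
                    Real.exp ⟪Function.update θ k' v k, x⟫) /
                  Real.sqrt
                    ((∑ k ∈ univ.erase (⟨0, hKpos⟩ : Fin K),
                        Real.exp ⟪Function.update θ k' v k, x⟫) ^ 2 +
                      ∑ k ∈ univ.erase (⟨0, hKpos⟩ : Fin K),
                        Real.exp ⟪Function.update θ k' v k, x⟫ ^ 2))) • x)
          (θ k') = 0) ↔
      ∀ k k' : Fin K, k ≠ ⟨0, hKpos⟩ → k' ≠ ⟨0, hKpos⟩ → ⟪θ k, x⟫ = ⟪θ k', x⟫ := by
  have ha : -(B / ‖x‖) ≠ 0 := neg_ne_zero.mpr (div_pos hB (norm_pos_iff.mpr hx)).ne'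
  have hconst := forall_sum_sq_eq_sum_mul_iff (s := univ.erase (⟨0, hKpos⟩ : Fin K))
    (f := fun k => Real.exp ⟪θ k, x⟫) fun _ _ => Real.exp_pos _
  simp only [mem_erase, mem_univ, and_true, Real.exp_eq_exp] at hconst
  refine (forall₂_congr fun k' hk' => fderiv_sum_exp_div_sqrt_smul_eq_zero_iff
    (mem_erase.mpr ⟨hk', mem_univ k'⟩) ha hx θ).trans (hconst.trans ?_)
  exact ⟨fun h k k' hk hk' => h k hk k' hk', fun h k hk k' hk' => h k k' hk hk'⟩

/-- For the clipped softmax gradient field restricted to class 1,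
`G⁽¹⁾(θ) = -(B/‖x‖)·(Σ_{k≥2} E_k)/√((Σ_{k≥2} E_k)² + Σ_{k≥2} E_k²) · x` with
`E_k = exp⟨θ⁽ᵏ⁾, x⟩`, the Jacobians `∇_{θ⁽ᵏ'⁾} G⁽¹⁾(θ)` for all `k' ≥ 2` vanish
simultaneously iff all inner products `⟨θ⁽ᵏ⁾, x⟩`, `k ≥ 2`, are equal.
(Class 1 is index `0 : Fin K`; classes `k ≥ 2` are the indices `k ≠ 0`.) -/
theorem stmt18 (p K : ℕ) (hK : 3 ≤ K) (hKpos : 0 < K) (B : ℝ) (hB : 0 < B)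
    (x : EuclideanSpace ℝ (Fin p)) (hx : x ≠ 0)
    (θ : Fin K → EuclideanSpace ℝ (Fin p)) :
    (∀ k' : Fin K, k' ≠ ⟨0, hKpos⟩ →
        fderiv ℝ
          (fun v : EuclideanSpace ℝ (Fin p) =>
            (-(B / ‖x‖) *
                ((∑ k ∈ univ.erase (⟨0, hKpos⟩ : Fin K),
                    Real.exp ⟪Function.update θ k' v k, x⟫) /
                  Real.sqrt
                    ((∑ k ∈ univ.erase (⟨0, hKpos⟩ : Fin K),
                        Real.exp ⟪Function.update θ k' v k, x⟫) ^ 2 +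
                      ∑ k ∈ univ.erase (⟨0, hKpos⟩ : Fin K),
                        Real.exp ⟪Function.update θ k' v k, x⟫ ^ 2))) • x)
          (θ k') = 0) ↔
      ∀ k k' : Fin K, k ≠ ⟨0, hKpos⟩ → k' ≠ ⟨0, hKpos⟩ → ⟪θ k, x⟫ = ⟪θ k', x⟫ :=
  stmt18_general p K hKpos B hB x hx θ
end
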